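/- For any (α,β) ∈ Δ, the image F(α,β) = (α',β') satisfies β' ≤ α'. -/
import Mathlib


noncomputable def Fop : ℝ × ℝ → ℝ × ℝ := fun p =>
  ((6*p.2 + 3*p.1 + 4*p.1*p.2)/(6 + 3*p.1),
   (3*p.1 + 4*p.1*p.2)/(6 + 6*p.2 + 3*p.1 + 4*p.1*p.2))

def Dset : Set (ℝ × ℝ) := {p | 0 ≤ p.1 ∧ p.1 ≤ 4 ∧ 0 ≤ p.2 ∧ p.2 ≤ 1}

theorem stmt9 : ∀ p ∈ Dset, (Fop p).2 ≤ (Fop p).1 := by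
  rintro ⟨a, b⟩ ⟨ha0, ha4, hb0, hb1⟩
  simp only [Fop]
  have h1 : (0:ℝ) < 6 + 3*a := by linarith
  have h2 : (0:ℝ) < 6 + 6*b + 3*a + 4*a*b := by nlinarith
  rw [div_le_div_iff₀ h2 h1]
  nlinarith [mul_nonneg ha0 hb0, mul_nonneg (mul_nonneg ha0 hb0) hb0,
    mul_nonneg (mul_nonneg ha0 ha0) hb0, sq_nonneg b, sq_nonneg a]
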